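/- For 0 < q < 1 and real a with aq ≠ 1, aq² ≠ 1, aq³ ≠ 1, the functions η_k(a;q) := ∑_{n=0}^∞ (-1)^n q^{n(n-1)/2} ((1 - aq^{2n+1})/(1 - aq)) ((aq;q)_n/(q;q)_n) (q^{-n}+aq^{n+1})^k satisfy the recurrence η_{k+1}(a;q) = (1 + aq)·η_k(a;q) − q^{-k-1}(1 − aq²)(1 − aq³)·η_k(aq²;q) for all k ≥ 0. -/

import Mathlib

/-!
Write `η_k(a) = ∑ c_n(a) μ(n;a)^k`. Then `η_{k+1}(a) - (1 + aq) η_k(a)` is the series of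
`c_n(a) μ(n;a)^k (μ(n;a) - 1 - aq)`, whose `n = 0` term vanishes because `μ(0;a) = 1 + aq`.
For `n ≥ 0`, `μ(n+1;a) - 1 - aq = q^{-n-1} (1 - q^{n+1}) (1 - aq^{n+2})`: the first factor cancels
the last factor of `(q;q)_{n+1}` and the second one completes `(aq;q)_{n+1}` to
`(aq;q)_{n+2} = (1 - aq)(1 - aq²)(aq³;q)_n`, so that
`c_{n+1}(a) (μ(n+1;a) - 1 - aq) = -q⁻¹ (1 - aq²)(1 - aq³) c_n(aq²)`.
Together with `q μ(n+1;a) = μ(n;aq²)` the shifted series is a multiple of the series of `η_k(aq²)`.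
The Gaussian factor `q^{n(n-1)/2}` makes all series converge absolutely.
-/

/-- The finite q-Pochhammer symbol `(x;q)_n = ∏_{k=0}^{n-1} (1 - x q^k)`. -/
noncomputable def qp (q x : ℝ) (n : ℕ) : ℝ := ∏ k ∈ Finset.range n, (1 - x * q ^ k)

/-- The moment function (A.8):
`η_k(a;q) = ∑_{n≥0} (-1)^n q^{n(n-1)/2} ((1-aq^{2n+1})/(1-aq)) ((aq;q)_n/(q;q)_n)
(q^{-n}+aq^{n+1})^k`. -/
noncomputable def eta (q a : ℝ) (k : ℕ) : ℝ :=
  ∑' n : ℕ,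
    (-1 : ℝ) ^ n * q ^ (n * (n - 1) / 2) *
      ((1 - a * q ^ (2 * n + 1)) / (1 - a * q)) *
      (qp q (a * q) n / qp q q n) *
      (q ^ (-(n : ℤ)) + a * q ^ (n + 1)) ^ k

open Filter Topology

theorem qp_succ (q x : ℝ) (n : ℕ) : qp q x (n + 1) = qp q x n * (1 - x * q ^ n) :=
  Finset.prod_range_succ _ _

theorem qp_succ' (q x : ℝ) (n : ℕ) : qp q x (n + 1) = (1 - x) * qp q (x * q) n := by
  rw [qp, qp, Finset.prod_range_succ', pow_zero, mul_one, mul_comm]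
  congr 1
  exact Finset.prod_congr rfl fun k _ => by ring

section Bounds

variable {q : ℝ}

theorem abs_one_sub_mul_pow_le (x : ℝ) (hq : |q| ≤ 1) (m : ℕ) : |1 - x * q ^ m| ≤ 1 + |x| := by
  have : |x| * |q| ^ m ≤ |x| :=
    mul_le_of_le_one_right (abs_nonneg x) (pow_le_one₀ (abs_nonneg q) hq)
  calc |1 - x * q ^ m| ≤ |1| + |x * q ^ m| := abs_sub _ _
    _ ≤ 1 + |x| := by rw [abs_one, abs_mul, abs_pow]; linarith

theorem abs_qp_le (x : ℝ) (hq : |q| ≤ 1) (n : ℕ) : |qp q x n| ≤ (1 + |x|) ^ n := by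
  rw [qp, Finset.abs_prod]
  simpa using Finset.prod_le_prod (fun k _ => abs_nonneg _)
    (fun k (_ : k ∈ Finset.range n) => abs_one_sub_mul_pow_le x hq k)

theorem one_sub_pow_le_qp_self (hq0 : 0 ≤ q) (hq1 : q ≤ 1) (n : ℕ) : (1 - q) ^ n ≤ qp q q n := by
  have hfactor (k : ℕ) : 1 - q ≤ 1 - q * q ^ k := by
    have := mul_le_of_le_one_right hq0 (pow_le_one₀ hq0 hq1 (n := k))
    linarith
  simpa [qp] using Finset.prod_le_prod (fun k (_ : k ∈ Finset.range n) => sub_nonneg.2 hq1)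
    (fun k _ => hfactor k)

theorem qp_self_pos (hq0 : 0 ≤ q) (hq1 : q < 1) (n : ℕ) : 0 < qp q q n :=
  (pow_pos (sub_pos.2 hq1) n).trans_le (one_sub_pow_le_qp_self hq0 hq1.le n)

theorem summable_pow_mul_pow_triangle (r : ℝ) (hq : |q| < 1) :
    Summable fun n : ℕ => r ^ n * q ^ (n * (n - 1) / 2) := by
  refine summable_of_ratio_norm_eventually_le (r := 1 / 2) (by norm_num) ?_
  have hlim : Tendsto (fun n : ℕ => |r| * |q| ^ n) atTop (𝓝 0) := by
    simpa using (tendsto_pow_atTop_nhds_zero_of_lt_one (abs_nonneg q) hq).const_mul |r|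
  filter_upwards [hlim.eventually_le_const (by norm_num : (0 : ℝ) < 1 / 2)] with n hn
  simp only [Nat.triangle_succ, pow_succ, pow_add, norm_mul, norm_pow, Real.norm_eq_abs]
  calc |r| ^ n * |r| * (|q| ^ (n * (n - 1) / 2) * |q| ^ n)
      = (|r| ^ n * |q| ^ (n * (n - 1) / 2)) * (|r| * |q| ^ n) := by ring
    _ ≤ (|r| ^ n * |q| ^ (n * (n - 1) / 2)) * (1 / 2) := by gcongr
    _ = 1 / 2 * (|r| ^ n * |q| ^ (n * (n - 1) / 2)) := by ring

end Bounds

noncomputable def etaCoeff (q a : ℝ) (n : ℕ) : ℝ :=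
  (-1 : ℝ) ^ n * q ^ (n * (n - 1) / 2) * ((1 - a * q ^ (2 * n + 1)) / (1 - a * q)) *
    (qp q (a * q) n / qp q q n)

noncomputable def mu (q a : ℝ) (n : ℕ) : ℝ := q ^ (-(n : ℤ)) + a * q ^ (n + 1)

theorem eta_eq_tsum (q a : ℝ) (k : ℕ) : eta q a k = ∑' n, etaCoeff q a n * mu q a n ^ k := rfl

section Mu

variable {q : ℝ} (a : ℝ)

theorem mu_eq_inv_pow_add (n : ℕ) : mu q a n = (q ^ n)⁻¹ + a * q ^ (n + 1) := by
  rw [mu, zpow_neg, zpow_natCast]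

theorem mu_zero : mu q a 0 = 1 + a * q := by
  simp [mu_eq_inv_pow_add]

theorem mu_mul_sq (hq : q ≠ 0) (n : ℕ) : mu q (a * q ^ 2) n = q * mu q a (n + 1) := by
  rw [mu_eq_inv_pow_add, mu_eq_inv_pow_add]
  field_simp
  ring

theorem mu_succ_sub (hq : q ≠ 0) (n : ℕ) :
    mu q a (n + 1) - (1 + a * q) = (1 - q ^ (n + 1)) * (1 - a * q ^ (n + 2)) / q ^ (n + 1) := by
  rw [mu_eq_inv_pow_add]
  field_simp
  ring

theorem abs_mu_le (hq0 : 0 < q) (hq1 : q ≤ 1) (n : ℕ) : |mu q a n| ≤ (1 + |a|) / q ^ n := by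
  have hqn : 0 < q ^ n := pow_pos hq0 n
  have hsmall : |a| * q ^ (n + 1) ≤ |a| / q ^ n := by
    rw [le_div_iff₀ hqn, mul_assoc]
    refine mul_le_of_le_one_right (abs_nonneg a) ?_
    rw [← pow_add]
    exact pow_le_one₀ hq0.le hq1
  calc |mu q a n| ≤ |(q ^ n)⁻¹| + |a * q ^ (n + 1)| := by
        rw [mu_eq_inv_pow_add]; exact abs_add_le _ _
    _ = 1 / q ^ n + |a| * q ^ (n + 1) := by
        rw [abs_of_pos (inv_pos.2 hqn), abs_mul, abs_of_pos (pow_pos hq0 _), one_div]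
    _ ≤ (1 + |a|) / q ^ n := by rw [add_div]; linarith

end Mu

section Coeff

variable {q a : ℝ}

theorem abs_etaCoeff_le (hq0 : 0 ≤ q) (hq1 : q < 1) (n : ℕ) :
    |etaCoeff q a n| ≤
      (1 + |a|) / |1 - a * q| * ((1 + |a|) / (1 - q)) ^ n * q ^ (n * (n - 1) / 2) := by
  have hq : |q| ≤ 1 := by rw [abs_of_nonneg hq0]; exact hq1.le
  have hnum : |qp q (a * q) n| ≤ (1 + |a|) ^ n := by
    refine (abs_qp_le _ hq n).trans (pow_le_pow_left₀ (by positivity) ?_ n)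
    rw [abs_mul]
    linarith [mul_le_of_le_one_right (abs_nonneg a) hq]
  have hden : (1 - q) ^ n ≤ qp q q n := one_sub_pow_le_qp_self hq0 hq1.le n
  have hpos : 0 < (1 - q) ^ n := pow_pos (sub_pos.2 hq1) n
  rw [etaCoeff, abs_mul, abs_mul, abs_mul, abs_div, abs_div, abs_pow, abs_neg, abs_one, one_pow,
    one_mul, abs_of_nonneg (pow_nonneg hq0 _), abs_of_pos (hpos.trans_le hden), div_pow]
  calc q ^ (n * (n - 1) / 2) * (|1 - a * q ^ (2 * n + 1)| / |1 - a * q|) *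
        (|qp q (a * q) n| / qp q q n)
      ≤ q ^ (n * (n - 1) / 2) * ((1 + |a|) / |1 - a * q|) * ((1 + |a|) ^ n / (1 - q) ^ n) := by
        gcongr
        · exact div_nonneg (abs_nonneg _) (hpos.trans_le hden).le
        · exact abs_one_sub_mul_pow_le a hq _
    _ = _ := by ring

theorem summable_etaCoeff_mul_mu_pow (hq0 : 0 < q) (hq1 : q < 1) (a : ℝ) (k : ℕ) :
    Summable fun n => etaCoeff q a n * mu q a n ^ k := by
  have hq : |q| < 1 := by rw [abs_of_pos hq0]; exact hq1
  refine .of_norm_bounded ((summable_pow_mul_pow_triangle ((1 + |a|) / (1 - q) / q ^ k) hq).mul_left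
    ((1 + |a|) / |1 - a * q| * (1 + |a|) ^ k)) fun n => ?_
  have hmu : |mu q a n| ^ k ≤ ((1 + |a|) / q ^ n) ^ k :=
    pow_le_pow_left₀ (abs_nonneg _) (abs_mu_le a hq0 hq1.le n) k
  rw [Real.norm_eq_abs, abs_mul, abs_pow]
  calc |etaCoeff q a n| * |mu q a n| ^ k
      ≤ ((1 + |a|) / |1 - a * q| * ((1 + |a|) / (1 - q)) ^ n * q ^ (n * (n - 1) / 2)) *
          ((1 + |a|) / q ^ n) ^ k :=
        mul_le_mul (abs_etaCoeff_le hq0.le hq1 n) hmu (by positivity) (by positivity)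
    _ = _ := by
        simp only [div_pow, ← pow_mul]
        rw [mul_comm k n]
        ring

theorem etaCoeff_succ_mul_mu_sub (hq0 : 0 < q) (hq1 : q < 1) (h1 : a * q ≠ 1)
    (h3 : a * q ^ 3 ≠ 1) (n : ℕ) :
    etaCoeff q a (n + 1) * (mu q a (n + 1) - (1 + a * q)) =
      -(q⁻¹ * (1 - a * q ^ 2) * (1 - a * q ^ 3)) * etaCoeff q (a * q ^ 2) n := by
  have hq : q ≠ 0 := hq0.ne'
  have hqq : qp q q n ≠ 0 := (qp_self_pos hq0.le hq1 n).ne'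
  have hqn : 1 - q ^ (n + 1) ≠ 0 := (sub_pos.2 (pow_lt_one₀ hq0.le hq1 n.succ_ne_zero)).ne'
  have ha1 : 1 - a * q ≠ 0 := sub_ne_zero.2 (Ne.symm h1)
  have ha3 : 1 - a * q ^ 3 ≠ 0 := sub_ne_zero.2 (Ne.symm h3)
  have hrel : qp q (a * q ^ 2) n * (1 - a * q ^ 2 * q ^ n) =
      (1 - a * q ^ 2) * qp q (a * q ^ 2 * q) n := by
    rw [← qp_succ, qp_succ']
  have hsplit : qp q (a * q) (n + 1) = (1 - a * q) * qp q (a * q ^ 2) n := by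
    rw [qp_succ', mul_assoc, ← sq]
  rw [etaCoeff, etaCoeff, Nat.triangle_succ, mu_succ_sub a hq, hsplit,
    qp_succ q q n, ← pow_succ']
  -- `hrel` expands `(aq²;q)_{n+1}` at either end
  linear_combination (norm := skip)
    (-(q⁻¹) * (-1) ^ n * q ^ (n * (n - 1) / 2) * (1 - a * q ^ 2 * q ^ (2 * n + 1)) / qp q q n) *
      hrel
  field_simp
  ring

theorem etaCoeff_succ_mul_mu_pow_mul_sub (hq0 : 0 < q) (hq1 : q < 1) (h1 : a * q ≠ 1)
    (h3 : a * q ^ 3 ≠ 1) (k n : ℕ) :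
    etaCoeff q a (n + 1) * mu q a (n + 1) ^ k * (mu q a (n + 1) - (1 + a * q)) =
      -((q ^ (k + 1))⁻¹ * (1 - a * q ^ 2) * (1 - a * q ^ 3)) *
        (etaCoeff q (a * q ^ 2) n * mu q (a * q ^ 2) n ^ k) := by
  rw [mul_right_comm, etaCoeff_succ_mul_mu_sub hq0 hq1 h1 h3, mu_mul_sq a hq0.ne', mul_pow]
  field_simp
  ring

end Coeff

theorem eta_recurrence_general (q a : ℝ) (hq0 : 0 < q) (hq1 : q < 1)
    (h1 : a * q ≠ 1) (h3 : a * q ^ 3 ≠ 1) (k : ℕ) :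
    eta q a (k + 1) =
      (1 + a * q) * eta q a k -
        (q ^ (k + 1))⁻¹ * (1 - a * q ^ 2) * (1 - a * q ^ 3) * eta q (a * q ^ 2) k := by
  have hsum : HasSum (fun n => etaCoeff q a n * mu q a n ^ k * (mu q a n - (1 + a * q)))
      (eta q a (k + 1) - (1 + a * q) * eta q a k) := by
    rw [eta_eq_tsum, eta_eq_tsum]
    exact ((summable_etaCoeff_mul_mu_pow hq0 hq1 a (k + 1)).hasSum.sub
      ((summable_etaCoeff_mul_mu_pow hq0 hq1 a k).hasSum.mul_left (1 + a * q))).congr_fun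
      fun n => by ring
  have hshift := (hasSum_nat_add_iff' 1).2 hsum
  simp only [Finset.range_one, Finset.sum_singleton, mu_zero, sub_self, mul_zero, sub_zero,
    etaCoeff_succ_mul_mu_pow_mul_sub hq0 hq1 h1 h3] at hshift
  have htail := hshift.unique
    ((summable_etaCoeff_mul_mu_pow hq0 hq1 (a * q ^ 2) k).hasSum.mul_left _)
  rw [← eta_eq_tsum] at htail
  linarith

/-- The recurrence
`η_{k+1}(a;q) = (1+aq) η_k(a;q) - q^{-k-1}(1-aq²)(1-aq³) η_k(aq²;q)`. -/
theorem eta_recurrence (q a : ℝ) (hq0 : 0 < q) (hq1 : q < 1)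
    (h1 : a * q ≠ 1) (h2 : a * q ^ 2 ≠ 1) (h3 : a * q ^ 3 ≠ 1) (k : ℕ) :
    eta q a (k + 1) =
      (1 + a * q) * eta q a k -
        (q ^ (k + 1))⁻¹ * (1 - a * q ^ 2) * (1 - a * q ^ 3) * eta q (a * q ^ 2) k :=
  eta_recurrence_general q a hq0 hq1 h1 h3 k
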